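/- arXiv:1210.6713 — 2 statements merged into one kernel-verified Lean document; each statement's English description precedes it below -/
import Mathlib

section
/- If $\alpha_1,\ldots,\alpha_n$ are pairwise distinct real numbers, then the $n\times n$ matrix $S_n$ whose $(i,k)$ entry is the $(i-1)$-th elementary symmetric polynomial in $\{\alpha_j : j \neq k\}$ is nonsingular. -/
/-- The elementary symmetric polynomial of degree `i` in the variables
`α_j`, `j ∈ s`. -/
def esymmOn {ι : Type*} [DecidableEq ι] (s : Finset ι) (α : ι → ℝ) (i : ℕ) : ℝ :=
  ∑ t ∈ s.powersetCard i, ∏ j ∈ t, α j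

lemma esymmOn_eq {ι : Type*} [DecidableEq ι] (s : Finset ι) (α : ι → ℝ) (i : ℕ) :
    esymmOn s α i = (s.val.map α).esymm i := by
  rw [esymmOn, Finset.esymm_map_val]

lemma key_identity (n : ℕ) (α : Fin n → ℝ) (k m : Fin n) :
    ∑ i : Fin n, (-1) ^ (i : ℕ) * α m ^ (n - 1 - (i : ℕ)) *
      esymmOn (Finset.univ.erase k) α (i : ℕ) =
    ∏ j ∈ Finset.univ.erase k, (α m - α j) := by
  have hcard : Multiset.card ((Finset.univ.erase k).val.map α) = n - 1 := by
    simp [Finset.card_erase_of_mem]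
  have h := Multiset.prod_X_sub_X_eq_sum_esymm ((Finset.univ.erase k).val.map α)
  have h2 := congrArg (Polynomial.eval (α m)) h
  rw [hcard] at h2
  have hn : n - 1 + 1 = n := Nat.succ_pred_eq_of_pos k.pos
  rw [hn] at h2
  simp only [Polynomial.eval_multiset_prod, Multiset.map_map, Function.comp,
    Polynomial.eval_sub, Polynomial.eval_X, Polynomial.eval_C, Polynomial.eval_finset_sum,
    Polynomial.eval_mul, Polynomial.eval_pow, Polynomial.eval_neg, Polynomial.eval_one] at h2
  rw [Fin.sum_univ_eq_sum_range (fun i => (-1 : ℝ) ^ i * α m ^ (n - 1 - i) *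
      esymmOn (Finset.univ.erase k) α i)]
  rw [Finset.prod_eq_multiset_prod]
  simp only [esymmOn_eq]
  rw [h2]
  exact Finset.sum_congr rfl fun i _ => by ring

/-- if `α_1, …, α_n` are pairwise distinct reals, then the matrix `S_n`
whose `(i,k)` entry is the elementary symmetric polynomial of degree `i-1` in
`{α_j : j ≠ k}` is nonsingular. -/
theorem stmt_3 (n : ℕ) (α : Fin n → ℝ) (hα : Function.Injective α) :
    IsUnit (Matrix.of fun i k : Fin n => esymmOn (Finset.univ.erase k) α (i : ℕ)) := by
  rw [Matrix.isUnit_iff_isUnit_det, isUnit_iff_ne_zero]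
  set S : Matrix (Fin n) (Fin n) ℝ :=
    Matrix.of fun i k : Fin n => esymmOn (Finset.univ.erase k) α (i : ℕ) with hS
  set B : Matrix (Fin n) (Fin n) ℝ :=
    Matrix.of fun m i : Fin n => (-1) ^ (i : ℕ) * α m ^ (n - 1 - (i : ℕ)) with hB
  have hBS : B * S =
      Matrix.diagonal fun k => ∏ j ∈ Finset.univ.erase k, (α k - α j) := by
    ext m k
    rw [Matrix.mul_apply]
    simp only [hB, hS, Matrix.of_apply]
    rw [key_identity n α k m]
    by_cases h : m = k
    · subst h; rw [Matrix.diagonal_apply_eq]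
    · rw [Matrix.diagonal_apply_ne _ h]
      exact Finset.prod_eq_zero (Finset.mem_erase.mpr ⟨h, Finset.mem_univ m⟩) (by simp)
  have hdet := congrArg Matrix.det hBS
  rw [Matrix.det_mul, Matrix.det_diagonal] at hdet
  have hne : (∏ k, ∏ j ∈ Finset.univ.erase k, (α k - α j)) ≠ 0 := by
    refine Finset.prod_ne_zero_iff.mpr fun k _ => Finset.prod_ne_zero_iff.mpr fun j hj => ?_
    exact sub_ne_zero_of_ne fun e => (Finset.mem_erase.mp hj).1 (hα e).symm
  exact fun h0 => hne (by rw [← hdet, h0, mul_zero])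
end

section
/- The determinant of the bordered diagonal matrix $\begin{pmatrix}\mathrm{diag}(\alpha_1+z,\ldots,\alpha_n+z) & a\\ b^\top & 0\end{pmatrix}$, viewed as a polynomial in $z$, equals $-(z^{n-1}, z^{n-2}, \ldots, 1)\, S_n\, (a_1b_1, \ldots, a_nb_n)^\top$, where $S_n$ is the matrix of elementary symmetric polynomials $s_{i-1}^{(k)}$ in $\{\alpha_j : j\neq k\}$. -/
open Polynomial

lemma key {n : ℕ} {K : Type*} [Field K] (d a b : Fin n → K) (hd : ∀ i, d i ≠ 0) :
    (Matrix.fromBlocks (Matrix.diagonal d)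
      (Matrix.of fun i (_ : Fin 1) => a i)
      (Matrix.of fun (_ : Fin 1) j => b j) 0).det
    = -∑ k, a k * b k * ∏ j ∈ Finset.univ.erase k, d j := by
  have hdet : (Matrix.diagonal d).det ≠ 0 := by
    rw [Matrix.det_diagonal]
    exact Finset.prod_ne_zero_iff.2 fun i _ => hd i
  haveI := (Matrix.diagonal d).invertibleOfIsUnitDet hdet.isUnit
  have hinv : (Matrix.diagonal d)⁻¹ = Matrix.diagonal (fun i => (d i)⁻¹) :=
    Matrix.inv_eq_right_inv (by
      rw [Matrix.diagonal_mul_diagonal]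
      rw [show (Matrix.diagonal fun i => d i * (d i)⁻¹) = 1 by
        rw [show (fun i => d i * (d i)⁻¹) = fun _ => (1:K) from
          funext fun i => mul_inv_cancel₀ (hd i)]; simp [Matrix.diagonal_one]])
  rw [Matrix.det_fromBlocks₁₁, Matrix.invOf_eq_nonsing_inv, hinv]
  rw [Matrix.det_fin_one]
  simp only [Matrix.sub_apply, Matrix.zero_apply, Matrix.mul_apply, Matrix.diagonal_apply,
    Matrix.of_apply, Matrix.det_diagonal]
  rw [zero_sub, mul_neg, neg_inj, Finset.mul_sum]
  refine Finset.sum_congr rfl fun k _ => ?_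
  rw [Finset.sum_eq_single k (by intro x _ h; simp [h]) (by simp)]
  rw [if_pos rfl, ← Finset.mul_prod_erase Finset.univ d (Finset.mem_univ k)]
  have h := hd k
  field_simp

lemma det_eq (n : ℕ) (α a b : Fin n → ℝ) :
    Matrix.det (Matrix.fromBlocks
        (Matrix.diagonal fun i => C (α i) + X)
        (Matrix.of fun i (_ : Fin 1) => (C (a i) : ℝ[X]))
        (Matrix.of fun (_ : Fin 1) j => (C (b j) : ℝ[X]))
        0) =
      -∑ k, C (a k) * C (b k) * ∏ j ∈ Finset.univ.erase k, (C (α j) + X) := by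
  classical
  set K := FractionRing ℝ[X]
  set f := algebraMap ℝ[X] K with hfdef
  have hf : Function.Injective f := IsFractionRing.injective _ _
  apply hf
  rw [RingHom.map_det]
  have hmap : (Matrix.fromBlocks
        (Matrix.diagonal fun i => C (α i) + X)
        (Matrix.of fun i (_ : Fin 1) => (C (a i) : ℝ[X]))
        (Matrix.of fun (_ : Fin 1) j => (C (b j) : ℝ[X]))
        0).map f = Matrix.fromBlocks
        (Matrix.diagonal fun i => f (C (α i) + X))
        (Matrix.of fun i (_ : Fin 1) => f (C (a i)))
        (Matrix.of fun (_ : Fin 1) j => f (C (b j)))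
        0 := by
    ext i j
    cases i <;> cases j <;>
      simp [Matrix.fromBlocks, Matrix.diagonal_apply, apply_ite f]
  rw [RingHom.mapMatrix_apply, hmap, key _ _ _ (fun i => by
    apply (map_ne_zero_iff f hf).2
    rw [add_comm]
    exact X_add_C_ne_zero _)]
  rw [map_neg, map_sum]
  refine congrArg _ (Finset.sum_congr rfl fun k _ => ?_)
  rw [map_mul, map_mul, map_prod]

/-- as polynomials in `z`, the determinant of the bordered diagonal
matrix `[[diag(α₁+z,…,αₙ+z), a], [bᵀ, 0]]` equals
`-(z^{n-1},…,z,1) Sₙ (a₁b₁,…,aₙbₙ)ᵀ`, where `Sₙ = (s_{i-1}^{(k)})` is the matrix of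
elementary symmetric polynomials in `{α_j : j ≠ k}`. -/
theorem stmt_5 (n : ℕ) (α a b : Fin n → ℝ) :
    Matrix.det (Matrix.fromBlocks
        (Matrix.diagonal fun i => C (α i) + X)
        (Matrix.of fun i (_ : Fin 1) => (C (a i) : ℝ[X]))
        (Matrix.of fun (_ : Fin 1) j => (C (b j) : ℝ[X]))
        0) =
      -∑ i : Fin n, ∑ k : Fin n,
        X ^ (n - 1 - (i : ℕ)) * C (esymmOn (Finset.univ.erase k) α (i : ℕ) * (a k * b k)) := by
  classical
  rw [det_eq, Finset.sum_comm, neg_inj]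
  refine Finset.sum_congr rfl fun k _ => ?_
  have hn : 1 ≤ n := k.pos
  set s : Finset (Fin n) := Finset.univ.erase k with hs
  have hcard : s.card = n - 1 := by
    rw [hs, Finset.card_erase_of_mem (Finset.mem_univ k), Finset.card_univ, Fintype.card_fin]
  have hv := Multiset.prod_X_add_C_eq_sum_esymm (s.val.map α)
  have hcard' : Multiset.card (s.val.map α) = n - 1 := by
    rw [Multiset.card_map]; exact hcard
  rw [hcard', Nat.sub_add_cancel hn] at hv
  have hprod : ∏ j ∈ s, (C (α j) + X) =
      ∑ j ∈ Finset.range n, C (esymmOn s α j) * X ^ (n - 1 - j) := by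
    have h1 : ∏ j ∈ s, (C (α j) + X) = ((s.val.map α).map fun r => X + C r).prod := by
      rw [Multiset.map_map]
      simp only [Finset.prod_eq_multiset_prod, Function.comp]
      congr 1
      exact Multiset.map_congr rfl fun j _ => (add_comm _ _)
    rw [h1, hv]
    refine Finset.sum_congr rfl fun j _ => ?_
    rw [Finset.esymm_map_val]
    rfl
  rw [hprod, Finset.mul_sum, Fin.sum_univ_eq_sum_range
    (fun i => X ^ (n - 1 - i) * C (esymmOn s α i * (a k * b k)))]
  refine Finset.sum_congr rfl fun j _ => ?_
  rw [C_mul, C_mul]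
  ring
end
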